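/- arXiv:1007.0567 — 4 statements merged into one kernel-verified Lean document; each statement's English description precedes it below -/
import Mathlib

section
/- Let a < b be real numbers, 0 < α < 1, and let f, g : [a,b] → ℝ be continuous functions such that the left Riemann–Liouville fractional derivative ₐD_t^α g and the right Riemann–Liouville fractional derivative ₜD_b^α f exist and are continuous at every point t ∈ [a,b]. Then ∫_a^b f(t) · ₐD_t^α g(t) dt = ∫_a^b g(t) · ₜD_b^α f(t) dt. -/
/-!
Write `Iₐ^β`, `I_b^β` for the left and right Riemann–Liouville integrals, so that
`ₐD_t^α g = (Iₐ^{1-α} g)'` and `ₜD_b^α f = -(I_b^{1-α} f)'`. If `φ = ₐD_t^α g` is continuous,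
the fundamental theorem of calculus gives `Iₐ^{1-α} g = Iₐ^1 φ`; applying `Iₐ^α` and the
semigroup law `I^β I^γ = I^{β+γ}` (a Beta integral) yields `Iₐ^1 g = Iₐ^1 (Iₐ^α φ)`, hence
Abel's inversion `g = Iₐ^α φ`. The reflection `t ↦ a + b - t` gives likewise `f = I_b^α ψ` for
`ψ = ₜD_b^α f`. Both sides of the theorem are then `∫ ψ · Iₐ^α φ = ∫ φ · I_b^α ψ`, which is
Fubini's theorem on the triangle `a ≤ y ≤ x ≤ b`.
-/

open MeasureTheory intervalIntegral Set Filter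

/-- The left Riemann–Liouville fractional derivative of order `α`:
`ₐD_t^α f(t) = (1/Γ(1-α)) · d/dt ∫_a^t (t-τ)^{-α} f(τ) dτ`. -/
noncomputable def leftRL (a α : ℝ) (f : ℝ → ℝ) (t : ℝ) : ℝ :=
  (1 / Real.Gamma (1 - α)) *
    deriv (fun s => ∫ τ in a..s, (s - τ) ^ (-α) * f τ) t

/-- The right Riemann–Liouville fractional derivative of order `α`:
`ₜD_b^α f(t) = (-1/Γ(1-α)) · d/dt ∫_t^b (τ-t)^{-α} f(τ) dτ`. -/
noncomputable def rightRL (b α : ℝ) (f : ℝ → ℝ) (t : ℝ) : ℝ :=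
  (-1 / Real.Gamma (1 - α)) *
    deriv (fun s => ∫ τ in s..b, (τ - s) ^ (-α) * f τ) t

open scoped Topology

noncomputable def leftRLIntegral (a β : ℝ) (u : ℝ → ℝ) (t : ℝ) : ℝ :=
  (Real.Gamma β)⁻¹ * ∫ s in a..t, (t - s) ^ (β - 1) * u s

noncomputable def rightRLIntegral (b β : ℝ) (u : ℝ → ℝ) (t : ℝ) : ℝ :=
  (Real.Gamma β)⁻¹ * ∫ s in t..b, (s - t) ^ (β - 1) * u s

theorem integral_rpow_mul_one_sub_rpow {β γ : ℝ} (hβ : 0 < β) (hγ : 0 < γ) :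
    ∫ x in (0:ℝ)..1, x ^ (β - 1) * (1 - x) ^ (γ - 1) =
      Real.Gamma β * Real.Gamma γ / Real.Gamma (β + γ) := by
  have hB : Complex.betaIntegral β γ = ↑(∫ x in (0:ℝ)..1, x ^ (β - 1) * (1 - x) ^ (γ - 1)) := by
    rw [Complex.betaIntegral, ← intervalIntegral.integral_ofReal]
    refine intervalIntegral.integral_congr fun x hx => ?_
    rw [uIcc_of_le zero_le_one] at hx
    rw [Complex.ofReal_mul, Complex.ofReal_cpow hx.1, Complex.ofReal_cpow (sub_nonneg.2 hx.2)]
    push_cast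
    rfl
  have h := Complex.Gamma_mul_Gamma_eq_betaIntegral (s := β) (t := γ) (by simpa) (by simpa)
  rw [hB, ← Complex.ofReal_add, Complex.Gamma_ofReal, Complex.Gamma_ofReal,
    Complex.Gamma_ofReal] at h
  rw [eq_div_iff (Real.Gamma_pos_of_pos (add_pos hβ hγ)).ne', mul_comm]
  exact_mod_cast h.symm

theorem integral_sub_rpow_mul_eq {a t β : ℝ} (hat : a ≤ t) (hβ : β ≠ 0) (u : ℝ → ℝ) :
    ∫ s in a..t, (t - s) ^ (β - 1) * u s =
      (t - a) ^ β * ∫ x in (0:ℝ)..1, (1 - x) ^ (β - 1) * u (a + (t - a) * x) := by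
  have h := intervalIntegral.smul_integral_comp_mul_add (a := 0) (b := 1)
    (fun s => (t - s) ^ (β - 1) * u s) (t - a) a
  simp only [mul_zero, zero_add, mul_one, sub_add_cancel, smul_eq_mul] at h
  have hpow : (t - a) ^ β = (t - a) ^ (β - 1) * (t - a) := by
    rw [← Real.rpow_add_one' (sub_nonneg.2 hat) (by simpa), sub_add_cancel]
  rw [← h, hpow, ← intervalIntegral.integral_const_mul, ← intervalIntegral.integral_const_mul]
  refine intervalIntegral.integral_congr fun x hx => ?_
  rw [uIcc_of_le zero_le_one] at hx
  have hsub : t - ((t - a) * x + a) = (t - a) * (1 - x) := by ring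
  simp only [hsub, Real.mul_rpow (sub_nonneg.2 hat) (sub_nonneg.2 hx.2)]
  ring_nf

-- `τ < t` is needed: at `τ = t` the right side is `0 ^ (β + γ - 1)`, which is `1` if `β + γ = 1`.
theorem integral_sub_rpow_mul_sub_rpow {τ t β γ : ℝ} (hτt : τ < t) (hβ : 0 < β) (hγ : 0 < γ) :
    ∫ s in τ..t, (t - s) ^ (β - 1) * (s - τ) ^ (γ - 1) =
      Real.Gamma β * Real.Gamma γ / Real.Gamma (β + γ) * (t - τ) ^ (β + γ - 1) := by
  have hd : 0 < t - τ := sub_pos.2 hτt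
  have hexp : (t - τ) ^ (β + γ - 1) = (t - τ) ^ β * (t - τ) ^ (γ - 1) := by
    rw [← Real.rpow_add hd]; ring_nf
  rw [integral_sub_rpow_mul_eq hτt.le hβ.ne', hexp, add_comm β γ, mul_comm (Real.Gamma β),
    ← integral_rpow_mul_one_sub_rpow hγ hβ, ← intervalIntegral.integral_mul_const,
    ← intervalIntegral.integral_const_mul]
  refine intervalIntegral.integral_congr fun x hx => ?_
  rw [uIcc_of_le zero_le_one] at hx
  simp only [add_sub_cancel_left, Real.mul_rpow hd.le hx.1]
  ring

theorem continuousOn_leftRLIntegral {a b β : ℝ} (hβ : 0 < β) {u : ℝ → ℝ}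
    (hu : ContinuousOn u (Icc a b)) : ContinuousOn (leftRLIntegral a β u) (Icc a b) := by
  obtain ⟨M, hM⟩ := isCompact_Icc.exists_bound_of_continuousOn hu
  have hmem : ∀ t ∈ Icc a b, ∀ x ∈ Icc (0:ℝ) 1, a + (t - a) * x ∈ Icc a b :=
    fun t ht x hx => ⟨by nlinarith [ht.1, hx.1], by nlinarith [ht.1, ht.2, hx.2]⟩
  have hscale : EqOn (fun t => (Real.Gamma β)⁻¹ * ((t - a) ^ β *
      ∫ x in Ioc (0:ℝ) 1, (1 - x) ^ (β - 1) * u (a + (t - a) * x))) (leftRLIntegral a β u)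
      (Icc a b) := fun t ht => by
    rw [leftRLIntegral, integral_sub_rpow_mul_eq ht.1 hβ.ne',
      intervalIntegral.integral_of_le zero_le_one]
  -- After rescaling to `[0, 1]` the domain no longer moves with `t`: dominated convergence.
  refine ContinuousOn.congr ?_ hscale.symm
  refine continuousOn_const.mul ((((continuous_id.sub continuous_const).rpow_const
    fun _ => Or.inr hβ.le)).continuousOn.mul ?_)
  refine continuousOn_of_dominated (bound := fun x => (1 - x) ^ (β - 1) * M) ?_ ?_ ?_ ?_
  · intro t ht
    refine ((measurable_const.sub measurable_id).pow_const _).aestronglyMeasurable.mul ?_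
    refine ((hu.comp (by fun_prop) (hmem t ht)).aestronglyMeasurable (μ := volume)
      measurableSet_Icc).mono_measure ?_
    exact Measure.restrict_mono Ioc_subset_Icc_self le_rfl
  · intro t ht
    filter_upwards [ae_restrict_mem measurableSet_Ioc] with x hx
    have hk : 0 ≤ (1 - x) ^ (β - 1) := Real.rpow_nonneg (sub_nonneg.2 hx.2) _
    rw [norm_mul, Real.norm_of_nonneg hk]
    exact mul_le_mul_of_nonneg_left (hM _ (hmem t ht x (Ioc_subset_Icc_self hx))) hk
  · refine (intervalIntegrable_iff_integrableOn_Ioc_of_le zero_le_one).1 ?_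
    refine IntervalIntegrable.mul_const ?_ M
    simpa using (intervalIntegral.intervalIntegrable_rpow' (a := 1) (b := 0)
      (by linarith : -1 < β - 1)).comp_sub_left 1
  · filter_upwards [ae_restrict_mem measurableSet_Ioc] with x hx
    exact continuousOn_const.mul
      (hu.comp (by fun_prop) fun t ht => hmem t ht x (Ioc_subset_Icc_self hx))

theorem setIntegral_Ioc_ite_le {a b x : ℝ} (hax : a ≤ x) (hxb : x ≤ b) (h : ℝ → ℝ) :
    ∫ y in Ioc a b, (if y ≤ x then h y else 0) = ∫ y in a..x, h y := by
  have hs : Iic x ∩ Ioc a b = Ioc a x := by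
    rw [inter_comm, Ioc_inter_Iic, min_eq_right hxb]
  rw [intervalIntegral.integral_of_le hax, ← hs, ← Measure.restrict_restrict measurableSet_Iic,
    ← MeasureTheory.integral_indicator measurableSet_Iic]
  simp only [indicator_apply, mem_Iic]

theorem setIntegral_Ioc_ite_ge {a b y : ℝ} (hay : a < y) (hyb : y ≤ b) (h : ℝ → ℝ) :
    ∫ x in Ioc a b, (if y ≤ x then h x else 0) = ∫ x in y..b, h x := by
  have hs : Ici y ∩ Ioc a b = Icc y b := by
    ext x
    simp only [mem_inter_iff, mem_Ici, mem_Ioc, mem_Icc]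
    exact ⟨fun ⟨h1, _, h3⟩ => ⟨h1, h3⟩, fun ⟨h1, h2⟩ => ⟨h1, hay.trans_le h1, h2⟩⟩
  rw [intervalIntegral.integral_of_le hyb, ← integral_Icc_eq_integral_Ioc (x := y), ← hs,
    ← Measure.restrict_restrict measurableSet_Ici,
    ← MeasureTheory.integral_indicator measurableSet_Ici]
  simp only [indicator_apply, mem_Ici]

theorem integral_integral_swap_triangle {a b : ℝ} (hab : a ≤ b) {F : ℝ → ℝ → ℝ}
    (hF : Integrable (Function.uncurry fun x y => if y ≤ x then F x y else 0)
      ((volume.restrict (Ioc a b)).prod (volume.restrict (Ioc a b)))) :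
    ∫ x in a..b, ∫ y in a..x, F x y = ∫ y in a..b, ∫ x in y..b, F x y := by
  rw [intervalIntegral.integral_of_le hab, intervalIntegral.integral_of_le hab]
  calc ∫ x in Ioc a b, ∫ y in a..x, F x y
      = ∫ x in Ioc a b, ∫ y in Ioc a b, (if y ≤ x then F x y else 0) :=
        setIntegral_congr_fun measurableSet_Ioc fun x hx =>
          (setIntegral_Ioc_ite_le hx.1.le hx.2 _).symm
    _ = ∫ y in Ioc a b, ∫ x in Ioc a b, (if y ≤ x then F x y else 0) := integral_integral_swap hF
    _ = ∫ y in Ioc a b, ∫ x in y..b, F x y :=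
        setIntegral_congr_fun measurableSet_Ioc fun y hy => setIntegral_Ioc_ite_ge hy.1 hy.2 _

theorem integral_sub_rpow {q : ℝ} (hq : -1 < q) (a x : ℝ) :
    ∫ y in a..x, (x - y) ^ q = (x - a) ^ (q + 1) / (q + 1) := by
  rw [intervalIntegral.integral_comp_sub_left (fun y => y ^ q), integral_rpow (Or.inl hq),
    sub_self, Real.zero_rpow (by linarith), sub_zero]

theorem intervalIntegrable_sub_rpow {q : ℝ} (hq : -1 < q) (a x : ℝ) :
    IntervalIntegrable (fun y => (x - y) ^ q) volume a x := by
  simpa using (intervalIntegral.intervalIntegrable_rpow' (a := x - a) (b := 0) hq).comp_sub_left x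

theorem integral_sub_rpow_mul_norm_le {a b x q M : ℝ} (hq : -1 < q) (hax : a ≤ x) (hxb : x ≤ b)
    {u : ℝ → ℝ} (hu : ContinuousOn u (Icc a b)) (hM : ∀ y ∈ Icc a b, ‖u y‖ ≤ M) :
    ∫ y in a..x, (x - y) ^ q * ‖u y‖ ≤ M * ((b - a) ^ (q + 1) / (q + 1)) := by
  have hsub : uIcc a x ⊆ Icc a b := by rw [uIcc_of_le hax]; exact Icc_subset_Icc_right hxb
  have hM0 : 0 ≤ M := (norm_nonneg _).trans (hM a ⟨le_rfl, hax.trans hxb⟩)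
  calc ∫ y in a..x, (x - y) ^ q * ‖u y‖ ≤ ∫ y in a..x, M * (x - y) ^ q := by
        refine intervalIntegral.integral_mono_on hax
          ((intervalIntegrable_sub_rpow hq a x).mul_continuousOn (hu.norm.mono hsub))
          ((intervalIntegrable_sub_rpow hq a x).const_mul M) fun y hy => ?_
        rw [mul_comm M]
        exact mul_le_mul_of_nonneg_left (hM y (Icc_subset_Icc_right hxb hy))
          (Real.rpow_nonneg (sub_nonneg.2 hy.2) q)
    _ = M * ((x - a) ^ (q + 1) / (q + 1)) := by
        rw [intervalIntegral.integral_const_mul, integral_sub_rpow hq]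
    _ ≤ M * ((b - a) ^ (q + 1) / (q + 1)) := by
        refine mul_le_mul_of_nonneg_left (div_le_div_of_nonneg_right ?_ (by linarith)) hM0
        exact Real.rpow_le_rpow (sub_nonneg.2 hax) (by linarith) (by linarith)

theorem integrable_ite_le_mul_sub_rpow {a b q : ℝ} (hq : -1 < q) {u v : ℝ → ℝ}
    (hu : ContinuousOn u (Icc a b)) (hv : IntegrableOn v (Ioc a b)) :
    Integrable (Function.uncurry fun x y => if y ≤ x then v x * ((x - y) ^ q * u y) else 0)
      ((volume.restrict (Ioc a b)).prod (volume.restrict (Ioc a b))) := by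
  obtain ⟨M, hM⟩ := isCompact_Icc.exists_bound_of_continuousOn hu
  have hslice : ∀ x ∈ Ioc a b,
      IntervalIntegrable (fun y => v x * ((x - y) ^ q * u y)) volume a x := fun x hx =>
    ((intervalIntegrable_sub_rpow hq a x).mul_continuousOn
      (hu.mono (by rw [uIcc_of_le hx.1.le]; exact Icc_subset_Icc_right hx.2))).const_mul (v x)
  have hind : (Function.uncurry fun x y => if y ≤ x then v x * ((x - y) ^ q * u y) else 0) =
      {z : ℝ × ℝ | z.2 ≤ z.1}.indicator fun z => v z.1 * ((z.1 - z.2) ^ q * u z.2) := by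
    ext ⟨x, y⟩; simp [indicator_apply]
  have hmeas : AEStronglyMeasurable
      (Function.uncurry fun x y => if y ≤ x then v x * ((x - y) ^ q * u y) else 0)
      ((volume.restrict (Ioc a b)).prod (volume.restrict (Ioc a b))) := by
    rw [hind]
    refine AEStronglyMeasurable.indicator ?_ (measurableSet_le measurable_snd measurable_fst)
    refine hv.aestronglyMeasurable.comp_fst.mul (AEStronglyMeasurable.mul ?_ ?_)
    · exact ((measurable_fst.sub measurable_snd).pow_const q).aestronglyMeasurable
    · exact ((hu.aestronglyMeasurable measurableSet_Icc).mono_measure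
        (Measure.restrict_mono Ioc_subset_Icc_self le_rfl)).comp_snd
  rw [integrable_prod_iff hmeas]
  constructor
  · filter_upwards [ae_restrict_mem measurableSet_Ioc] with x hx
    have hG := (intervalIntegrable_iff_integrableOn_Ioc_of_le hx.1.le).1 (hslice x hx)
    refine (hG.integrable_indicator measurableSet_Ioc).integrableOn.congr_fun (fun y hy => ?_)
      measurableSet_Ioc
    simp [indicator_apply, hy.1]
  · refine Integrable.mono' (hv.norm.mul_const (M * ((b - a) ^ (q + 1) / (q + 1))))
      hmeas.norm.integral_prod_right' ?_
    filter_upwards [ae_restrict_mem measurableSet_Ioc] with x hx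
    rw [Real.norm_of_nonneg (integral_nonneg fun _ => norm_nonneg _)]
    calc ∫ y in Ioc a b, ‖Function.uncurry
            (fun x y => if y ≤ x then v x * ((x - y) ^ q * u y) else 0) (x, y)‖
        = ∫ y in Ioc a b, if y ≤ x then ‖v x‖ * ((x - y) ^ q * ‖u y‖) else 0 := by
          congr 1; ext y
          simp only [Function.uncurry_apply_pair]
          split_ifs with hyx
          · rw [norm_mul, norm_mul, Real.norm_of_nonneg (Real.rpow_nonneg (sub_nonneg.2 hyx) q)]
          · exact norm_zero
      _ = ‖v x‖ * ∫ y in a..x, (x - y) ^ q * ‖u y‖ := by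
          rw [setIntegral_Ioc_ite_le hx.1.le hx.2, intervalIntegral.integral_const_mul]
      _ ≤ ‖v x‖ * (M * ((b - a) ^ (q + 1) / (q + 1))) :=
          mul_le_mul_of_nonneg_left (integral_sub_rpow_mul_norm_le hq hx.1.le hx.2 hu hM)
            (norm_nonneg _)

theorem integral_mul_leftRLIntegral {a b β : ℝ} (hab : a ≤ b) (hβ : 0 < β) {u v : ℝ → ℝ}
    (hu : ContinuousOn u (Icc a b)) (hv : IntervalIntegrable v volume a b) :
    ∫ x in a..b, v x * leftRLIntegral a β u x = ∫ y in a..b, u y * rightRLIntegral b β v y := by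
  have h := integral_integral_swap_triangle hab (integrable_ite_le_mul_sub_rpow
    (by linarith : -1 < β - 1) hu ((intervalIntegrable_iff_integrableOn_Ioc_of_le hab).1 hv))
  simp only [leftRLIntegral, rightRLIntegral, mul_left_comm (v _), mul_left_comm (u _),
    intervalIntegral.integral_const_mul]
  congr 1
  simp only [← intervalIntegral.integral_const_mul]
  exact h.trans (intervalIntegral.integral_congr fun y _ =>
    intervalIntegral.integral_congr fun x _ => by ring)

theorem leftRLIntegral_congr {a t β : ℝ} (hat : a ≤ t) {u v : ℝ → ℝ} (h : EqOn u v (Icc a t)) :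
    leftRLIntegral a β u t = leftRLIntegral a β v t := by
  rw [leftRLIntegral, leftRLIntegral, intervalIntegral.integral_congr fun s hs => ?_]
  rw [uIcc_of_le hat] at hs
  rw [h hs]

theorem leftRLIntegral_one (a : ℝ) (u : ℝ → ℝ) (t : ℝ) :
    leftRLIntegral a 1 u t = ∫ s in a..t, u s := by
  simp [leftRLIntegral]

theorem leftRLIntegral_leftRLIntegral {a t β γ : ℝ} (hat : a ≤ t) (hβ : 0 < β) (hγ : 0 < γ)
    {u : ℝ → ℝ} (hu : ContinuousOn u (Icc a t)) :
    leftRLIntegral a β (leftRLIntegral a γ u) t = leftRLIntegral a (β + γ) u t := by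
  have hΓβ := (Real.Gamma_pos_of_pos hβ).ne'
  have hΓγ := (Real.Gamma_pos_of_pos hγ).ne'
  have hΓβγ := (Real.Gamma_pos_of_pos (add_pos hβ hγ)).ne'
  have hker : ∀ y ∈ Ioo a t, rightRLIntegral t γ (fun x => (t - x) ^ (β - 1)) y =
      Real.Gamma β / Real.Gamma (β + γ) * (t - y) ^ (β + γ - 1) := fun y hy => by
    simp only [rightRLIntegral, mul_comm ((_ - y) ^ (γ - 1))]
    rw [integral_sub_rpow_mul_sub_rpow hy.2 hβ hγ]
    field_simp
  rw [leftRLIntegral, integral_mul_leftRLIntegral hat hγ hu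
    (intervalIntegrable_sub_rpow (by linarith) a t), leftRLIntegral,
    intervalIntegral.integral_of_le hat, intervalIntegral.integral_of_le hat,
    integral_Ioc_eq_integral_Ioo, integral_Ioc_eq_integral_Ioo, ← MeasureTheory.integral_const_mul,
    ← MeasureTheory.integral_const_mul]
  refine setIntegral_congr_fun measurableSet_Ioo fun y hy => ?_
  rw [hker y hy]
  field_simp

theorem eqOn_of_forall_integral_eq {a b : ℝ} (hab : a < b) {u w : ℝ → ℝ}
    (hu : ContinuousOn u (Icc a b)) (hw : ContinuousOn w (Icc a b))
    (h : ∀ t ∈ Icc a b, ∫ s in a..t, u s = ∫ s in a..t, w s) : EqOn u w (Icc a b) := by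
  refine EqOn.of_subset_closure (s := Ioo a b) (fun t ht => ?_) hu hw Ioo_subset_Icc_self
    (closure_Ioo hab.ne).ge
  have hIcc : Icc a b ∈ 𝓝 t := Icc_mem_nhds ht.1 ht.2
  have hderiv : ∀ {f : ℝ → ℝ}, ContinuousOn f (Icc a b) →
      HasDerivAt (fun x => ∫ s in a..x, f s) (f t) t := fun hf =>
    intervalIntegral.integral_hasDerivAt_right
      (hf.mono (by rw [uIcc_of_le ht.1.le]; exact Icc_subset_Icc_right ht.2.le)).intervalIntegrable
      ((hf.mono Ioo_subset_Icc_self).stronglyMeasurableAtFilter isOpen_Ioo t ht)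
      (hf.continuousAt hIcc)
  exact (hderiv hu).unique ((hderiv hw).congr_of_eventuallyEq (eventually_of_mem hIcc h))

theorem eqOn_leftRLIntegral_of_leftRLIntegral_eq {a b α : ℝ} (hab : a < b) (hα0 : 0 < α)
    (hα1 : α < 1) {u φ : ℝ → ℝ} (hu : ContinuousOn u (Icc a b)) (hφ : ContinuousOn φ (Icc a b))
    (h : ∀ t ∈ Icc a b, leftRLIntegral a (1 - α) u t = ∫ s in a..t, φ s) :
    EqOn u (leftRLIntegral a α φ) (Icc a b) := by
  refine eqOn_of_forall_integral_eq hab hu (continuousOn_leftRLIntegral hα0 hφ) fun t ht => ?_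
  have hsub : Icc a t ⊆ Icc a b := Icc_subset_Icc_right ht.2
  calc ∫ s in a..t, u s = leftRLIntegral a α (leftRLIntegral a (1 - α) u) t := by
        rw [leftRLIntegral_leftRLIntegral ht.1 hα0 (by linarith) (hu.mono hsub),
          add_sub_cancel, leftRLIntegral_one]
    _ = leftRLIntegral a α (leftRLIntegral a 1 φ) t :=
        leftRLIntegral_congr ht.1 fun s hs => by rw [h s (hsub hs), leftRLIntegral_one]
    _ = leftRLIntegral a 1 (leftRLIntegral a α φ) t := by
        rw [leftRLIntegral_leftRLIntegral ht.1 hα0 one_pos (hφ.mono hsub), add_comm,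
          leftRLIntegral_leftRLIntegral ht.1 one_pos hα0 (hφ.mono hsub)]
    _ = ∫ s in a..t, leftRLIntegral a α φ s := leftRLIntegral_one _ _ _

theorem leftRLIntegral_comp_sub_left (a b β : ℝ) (v : ℝ → ℝ) (t : ℝ) :
    leftRLIntegral a β (fun s => v (a + b - s)) t = rightRLIntegral b β v (a + b - t) := by
  rw [leftRLIntegral, rightRLIntegral]
  congr 1
  have h := intervalIntegral.integral_comp_sub_left (a := a) (b := t)
    (fun x => (x - (a + b - t)) ^ (β - 1) * v x) (a + b)
  simp only [add_sub_cancel_left, sub_sub_sub_cancel_left] at h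
  rw [← h]

theorem eqOn_rightRLIntegral_of_rightRLIntegral_eq {a b α : ℝ} (hab : a < b) (hα0 : 0 < α)
    (hα1 : α < 1) {u ψ : ℝ → ℝ} (hu : ContinuousOn u (Icc a b)) (hψ : ContinuousOn ψ (Icc a b))
    (h : ∀ t ∈ Icc a b, rightRLIntegral b (1 - α) u t = ∫ s in t..b, ψ s) :
    EqOn u (rightRLIntegral b α ψ) (Icc a b) := by
  have hr : MapsTo (fun s => a + b - s) (Icc a b) (Icc a b) :=
    fun s hs => ⟨by linarith [hs.2], by linarith [hs.1]⟩
  have hrefl := eqOn_leftRLIntegral_of_leftRLIntegral_eq hab hα0 hα1 (hu.comp (by fun_prop) hr)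
    (hψ.comp (by fun_prop) hr) fun t ht => by
      simp only [Function.comp_def]
      rw [leftRLIntegral_comp_sub_left, h _ (hr ht),
        intervalIntegral.integral_comp_sub_left (fun s => ψ s), add_sub_cancel_left]
  intro y hy
  simpa only [Function.comp_def, leftRLIntegral_comp_sub_left, sub_sub_cancel] using hrefl (hr hy)

theorem leftRLIntegral_one_sub (a α : ℝ) (g : ℝ → ℝ) :
    leftRLIntegral a (1 - α) g =
      fun t => (Real.Gamma (1 - α))⁻¹ * ∫ τ in a..t, (t - τ) ^ (-α) * g τ := by
  ext t
  simp only [leftRLIntegral, sub_sub_cancel_left]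

theorem rightRLIntegral_one_sub (b α : ℝ) (f : ℝ → ℝ) :
    rightRLIntegral b (1 - α) f =
      fun t => (Real.Gamma (1 - α))⁻¹ * ∫ τ in t..b, (τ - t) ^ (-α) * f τ := by
  ext t
  simp only [rightRLIntegral, sub_sub_cancel_left]

theorem leftRL_eq_deriv_leftRLIntegral (a α : ℝ) (g : ℝ → ℝ) :
    leftRL a α g = deriv (leftRLIntegral a (1 - α) g) := by
  ext t
  rw [leftRLIntegral_one_sub, deriv_const_mul_field', leftRL, one_div]

theorem rightRL_eq_neg_deriv_rightRLIntegral (b α : ℝ) (f : ℝ → ℝ) :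
    rightRL b α f = -deriv (rightRLIntegral b (1 - α) f) := by
  ext t
  rw [rightRLIntegral_one_sub, Pi.neg_apply, deriv_const_mul_field', rightRL, neg_div, one_div,
    neg_mul]

theorem leftRLIntegral_eq_integral_leftRL {a b α : ℝ} {g : ℝ → ℝ}
    (hgex : ∀ t ∈ Icc a b,
      DifferentiableAt ℝ (fun s => ∫ τ in a..s, (s - τ) ^ (-α) * g τ) t)
    (hgcont : ContinuousOn (leftRL a α g) (Icc a b)) :
    ∀ t ∈ Icc a b, leftRLIntegral a (1 - α) g t = ∫ s in a..t, leftRL a α g s := by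
  intro t ht
  have hsub : uIcc a t ⊆ Icc a b := by rw [uIcc_of_le ht.1]; exact Icc_subset_Icc_right ht.2
  rw [intervalIntegral.integral_eq_sub_of_hasDerivAt (f := leftRLIntegral a (1 - α) g)
    (fun x hx => ?_) ((hgcont.mono hsub).intervalIntegrable)]
  · simp [leftRLIntegral]
  · rw [leftRL_eq_deriv_leftRLIntegral, leftRLIntegral_one_sub]
    exact ((hgex x (hsub hx)).const_mul _).hasDerivAt

theorem rightRLIntegral_eq_integral_rightRL {a b α : ℝ} {f : ℝ → ℝ}
    (hfex : ∀ t ∈ Icc a b,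
      DifferentiableAt ℝ (fun s => ∫ τ in s..b, (τ - s) ^ (-α) * f τ) t)
    (hfcont : ContinuousOn (rightRL b α f) (Icc a b)) :
    ∀ t ∈ Icc a b, rightRLIntegral b (1 - α) f t = ∫ s in t..b, rightRL b α f s := by
  intro t ht
  have hsub : uIcc t b ⊆ Icc a b := by rw [uIcc_of_le ht.2]; exact Icc_subset_Icc_left ht.1
  rw [intervalIntegral.integral_eq_sub_of_hasDerivAt (f := -rightRLIntegral b (1 - α) f)
    (fun x hx => ?_) ((hfcont.mono hsub).intervalIntegrable)]
  · simp [rightRLIntegral]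
  · rw [rightRL_eq_neg_deriv_rightRLIntegral, rightRLIntegral_one_sub]
    exact ((hfex x (hsub hx)).const_mul _).hasDerivAt.neg

/-- **Fractional integration by parts.** If `f, g` are continuous on `[a,b]`, the left
Riemann–Liouville fractional derivative of `g` and the right Riemann–Liouville fractional
derivative of `f` (of order `0 < α < 1`) exist and are continuous at every point of `[a,b]`,
then `∫_a^b f(t) ₐD_t^α g(t) dt = ∫_a^b g(t) ₜD_b^α f(t) dt`. -/
theorem fractional_integration_by_parts
    (a b α : ℝ) (hab : a < b) (hα0 : 0 < α) (hα1 : α < 1)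
    (f g : ℝ → ℝ)
    (hf : ContinuousOn f (Set.Icc a b)) (hg : ContinuousOn g (Set.Icc a b))
    (hgex : ∀ t ∈ Set.Icc a b,
      DifferentiableAt ℝ (fun s => ∫ τ in a..s, (s - τ) ^ (-α) * g τ) t)
    (hgcont : ContinuousOn (leftRL a α g) (Set.Icc a b))
    (hfex : ∀ t ∈ Set.Icc a b,
      DifferentiableAt ℝ (fun s => ∫ τ in s..b, (τ - s) ^ (-α) * f τ) t)
    (hfcont : ContinuousOn (rightRL b α f) (Set.Icc a b)) :
    ∫ t in a..b, f t * leftRL a α g t = ∫ t in a..b, g t * rightRL b α f t := by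
  have hg_eq := eqOn_leftRLIntegral_of_leftRLIntegral_eq hab hα0 hα1 hg hgcont
    (leftRLIntegral_eq_integral_leftRL hgex hgcont)
  have hf_eq := eqOn_rightRLIntegral_of_rightRLIntegral_eq hab hα0 hα1 hf hfcont
    (rightRLIntegral_eq_integral_rightRL hfex hfcont)
  calc ∫ t in a..b, f t * leftRL a α g t
      = ∫ t in a..b, leftRL a α g t * rightRLIntegral b α (rightRL b α f) t :=
        intervalIntegral.integral_congr fun t ht => by
          rw [uIcc_of_le hab.le] at ht; rw [hf_eq ht, mul_comm]
    _ = ∫ t in a..b, rightRL b α f t * leftRLIntegral a α (leftRL a α g) t :=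
        (integral_mul_leftRLIntegral hab.le hα0 hgcont
          (hfcont.intervalIntegrable_of_Icc hab.le)).symm
    _ = ∫ t in a..b, g t * rightRL b α f t :=
        intervalIntegral.integral_congr fun t ht => by
          rw [uIcc_of_le hab.le] at ht; rw [hg_eq ht, mul_comm]
end

section
/- Let a < b be real numbers, 0 < α < 1, and let f : [a,b] → ℝ be continuously differentiable with f(b) ≠ 0. Then the right Riemann–Liouville fractional derivative ₜD_b^α f(t) blows up at the right endpoint: |ₜD_b^α f(t)| → ∞ as t → b⁻. Consequently, if f is continuously differentiable and t ↦ ₜD_b^α f(t) extends to a continuous function on all of [a,b], then f(b) = 0. -/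
open MeasureTheory intervalIntegral Set Filter

/-!
Substituting `τ = s + (b - s) v` gives `∫_s^b (τ - s)^{-α} f(τ) dτ = (b - s)^{1-α} P(s)` with
`P(s) = ∫_0^1 v^{-α} f(s + (b - s) v) dv`, an integral whose singularity no longer moves with `s`,
so it can be differentiated under the integral sign. By the product rule the derivative of the
left side is `(b - s)^{-α} ((b - s) P'(s) - (1 - α) P(s))`. As `f'` is bounded on `[a, b]`, `P'`
stays bounded and `P(s) → f(b) / (1 - α)` when `s → b⁻`, so the bracket tends to `-f(b) ≠ 0`
while `(b - s)^{-α} → ∞`. A continuous extension of `ₜD_b^α f` to `[a, b]` would instead be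
bounded near `b`.
-/

open Topology

noncomputable def rightRLMean (b α : ℝ) (f : ℝ → ℝ) (s : ℝ) : ℝ :=
  ∫ v in (0 : ℝ)..1, v ^ (-α) * f (s + (b - s) * v)

noncomputable def rightRLMeanDeriv (a b α : ℝ) (f : ℝ → ℝ) (s : ℝ) : ℝ :=
  ∫ v in (0 : ℝ)..1, v ^ (-α) * ((1 - v) * derivWithin f (Icc a b) (s + (b - s) * v))

section

variable {a b α s t : ℝ} {f : ℝ → ℝ}

lemma add_sub_mul_mem_Icc {v : ℝ} (hs : s ∈ Icc a b) (hv : v ∈ Icc (0 : ℝ) 1) :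
    s + (b - s) * v ∈ Icc a b :=
  ⟨by nlinarith [mul_nonneg (sub_nonneg.2 hs.2) hv.1, hs.1],
    by nlinarith [mul_nonneg (sub_nonneg.2 hs.2) (sub_nonneg.2 hv.2)]⟩

lemma add_sub_mul_mem_Ioo {v : ℝ} (hs : s ∈ Ioo a b) (hv : v ∈ Ico (0 : ℝ) 1) :
    s + (b - s) * v ∈ Ioo a b :=
  ⟨by nlinarith [hs.1, hs.2, hv.1], by nlinarith [hs.2, hv.2]⟩

lemma ContinuousOn.comp_add_sub_mul {h : ℝ → ℝ} (hh : ContinuousOn h (Icc a b))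
    (hs : s ∈ Icc a b) : ContinuousOn (fun v => h (s + (b - s) * v)) (Icc 0 1) :=
  hh.comp (by fun_prop) fun _ hv => add_sub_mul_mem_Icc hs hv

lemma intervalIntegrable_rpow_neg_mul (hα : α < 1) {k : ℝ → ℝ}
    (hk : ContinuousOn k (Icc 0 1)) :
    IntervalIntegrable (fun v => v ^ (-α) * k v) volume 0 1 :=
  (intervalIntegrable_rpow' (by linarith)).mul_continuousOn (by rwa [uIcc_of_le zero_le_one])

lemma integral_rpow_neg_mul_const (hα : α < 1) (C : ℝ) :
    ∫ v in (0 : ℝ)..1, v ^ (-α) * C = C / (1 - α) := by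
  rw [intervalIntegral.integral_mul_const, integral_rpow (Or.inl (by linarith)),
    Real.one_rpow, Real.zero_rpow (by linarith)]
  field_simp
  ring

lemma norm_rpow_neg_mul_le {v y C : ℝ} (hv : 0 ≤ v) (hy : ‖y‖ ≤ C) :
    ‖v ^ (-α) * y‖ ≤ v ^ (-α) * C := by
  rw [norm_mul, Real.norm_of_nonneg (Real.rpow_nonneg hv _)]
  exact mul_le_mul_of_nonneg_left hy (Real.rpow_nonneg hv _)

lemma norm_one_sub_mul_le {v y C : ℝ} (hv : v ∈ Icc (0 : ℝ) 1) (hy : ‖y‖ ≤ C) :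
    ‖(1 - v) * y‖ ≤ C := by
  rw [norm_mul, Real.norm_of_nonneg (sub_nonneg.2 hv.2)]
  exact (mul_le_of_le_one_left (norm_nonneg _) (by linarith [hv.1])).trans hy

lemma norm_integral_rpow_neg_mul_le (hα : α < 1) {k : ℝ → ℝ} {C : ℝ}
    (hk : ∀ v ∈ Ioc (0 : ℝ) 1, ‖k v‖ ≤ C) :
    ‖∫ v in (0 : ℝ)..1, v ^ (-α) * k v‖ ≤ C / (1 - α) := by
  have hC : 0 ≤ C := (norm_nonneg _).trans (hk 1 ⟨one_pos, le_rfl⟩)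
  calc ‖∫ v in (0 : ℝ)..1, v ^ (-α) * k v‖ ≤ |∫ v in (0 : ℝ)..1, v ^ (-α) * C| := by
        refine intervalIntegral.norm_integral_le_abs_of_norm_le
          (ae_restrict_of_forall_mem measurableSet_uIoc fun v hv => ?_)
          ((intervalIntegrable_rpow' (by linarith)).mul_const C)
        rw [uIoc_of_le zero_le_one] at hv
        exact norm_rpow_neg_mul_le hv.1.le (hk v hv)
    _ = C / (1 - α) := by
        rw [integral_rpow_neg_mul_const hα, abs_of_nonneg (div_nonneg hC (by linarith))]

lemma integral_rpow_sub_mul_eq (hs : s < b) (f : ℝ → ℝ) :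
    ∫ τ in s..b, (τ - s) ^ (-α) * f τ = (b - s) ^ (1 - α) * rightRLMean b α f s := by
  have hbs : 0 < b - s := sub_pos.2 hs
  have hsubst := intervalIntegral.smul_integral_comp_add_mul
    (fun τ => (τ - s) ^ (-α) * f τ) (a := 0) (b := 1) (b - s) s
  rw [mul_zero, add_zero, mul_one, add_sub_cancel] at hsubst
  rw [← hsubst, smul_eq_mul, rightRLMean, ← intervalIntegral.integral_const_mul,
    ← intervalIntegral.integral_const_mul]
  refine intervalIntegral.integral_congr fun v hv => ?_
  rw [uIcc_of_le zero_le_one] at hv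
  rw [add_sub_cancel_left, Real.mul_rpow hbs.le hv.1, show 1 - α = 1 + -α by ring,
    Real.rpow_add hbs, Real.rpow_one]
  ring

lemma hasDerivAt_comp_add_sub_mul {v : ℝ} (hf : DifferentiableOn ℝ f (Icc a b))
    (hs : s ∈ Ioo a b) (hv : v ∈ Ico (0 : ℝ) 1) :
    HasDerivAt (fun x => f (x + (b - x) * v))
      ((1 - v) * derivWithin f (Icc a b) (s + (b - s) * v)) s := by
  have hx := add_sub_mul_mem_Ioo hs hv
  have hfx : HasDerivAt f (derivWithin f (Icc a b) (s + (b - s) * v)) (s + (b - s) * v) :=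
    (hf _ (Ioo_subset_Icc_self hx)).hasDerivWithinAt.hasDerivAt (Icc_mem_nhds hx.1 hx.2)
  have hline : HasDerivAt (fun x => x + (b - x) * v) (1 - v) s :=
    ((hasDerivAt_id s).add (((hasDerivAt_id s).const_sub b).mul_const v)).congr_deriv (by ring)
  exact (hfx.comp s hline).congr_deriv (mul_comm _ _)

lemma hasDerivAt_rightRLMean (hα : α < 1) (hf : ContDiffOn ℝ 1 f (Icc a b)) (ht : t ∈ Ioo a b) :
    HasDerivAt (rightRLMean b α f) (rightRLMeanDeriv a b α f t) t := by
  set f' := derivWithin f (Icc a b)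
  have hf' : ContinuousOn f' (Icc a b) :=
    hf.continuousOn_derivWithin (uniqueDiffOn_Icc (ht.1.trans ht.2)) le_rfl
  obtain ⟨M, hM⟩ := isCompact_Icc.exists_bound_of_continuousOn hf'
  have hF_int : ∀ s ∈ Ioo a b,
      IntervalIntegrable (fun v => v ^ (-α) * f (s + (b - s) * v)) volume 0 1 := fun s hs =>
    intervalIntegrable_rpow_neg_mul hα (hf.continuousOn.comp_add_sub_mul (Ioo_subset_Icc_self hs))
  have hF'_int : IntervalIntegrable (fun v => v ^ (-α) * ((1 - v) * f' (t + (b - t) * v)))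
      volume 0 1 :=
    intervalIntegrable_rpow_neg_mul hα
      ((continuousOn_const.sub continuousOn_id).mul
        (hf'.comp_add_sub_mul (Ioo_subset_Icc_self ht)))
  have hIoo : Ioo a b ∈ 𝓝 t := Ioo_mem_nhds ht.1 ht.2
  refine (intervalIntegral.hasDerivAt_integral_of_dominated_loc_of_deriv_le
    (F := fun s v => v ^ (-α) * f (s + (b - s) * v))
    (F' := fun s v => v ^ (-α) * ((1 - v) * f' (s + (b - s) * v)))
    (bound := fun v => v ^ (-α) * M) hIoo
    (eventually_of_mem hIoo fun s hs => (hF_int s hs).def'.aestronglyMeasurable) (hF_int t ht)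
    hF'_int.def'.aestronglyMeasurable ?_ ((intervalIntegrable_rpow' (by linarith)).mul_const M)
    ?_).2
  · refine ae_of_all _ fun v hv s hs => ?_
    rw [uIoc_of_le zero_le_one] at hv
    exact norm_rpow_neg_mul_le hv.1.le (norm_one_sub_mul_le (Ioc_subset_Icc_self hv)
      (hM _ (add_sub_mul_mem_Icc (Ioo_subset_Icc_self hs) (Ioc_subset_Icc_self hv))))
  -- `v = 1` is excluded: there `s + (b - s) v = b`, where `f` need not be differentiable.
  · filter_upwards [Measure.ae_ne volume 1] with v hv1 hv s hs
    rw [uIoc_of_le zero_le_one] at hv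
    exact (hasDerivAt_comp_add_sub_mul (hf.differentiableOn one_ne_zero) hs
      ⟨hv.1.le, lt_of_le_of_ne hv.2 hv1⟩).const_mul _

lemma hasDerivAt_integral_rpow_sub_mul (hα : α < 1) (hf : ContDiffOn ℝ 1 f (Icc a b))
    (ht : t ∈ Ioo a b) :
    HasDerivAt (fun s => ∫ τ in s..b, (τ - s) ^ (-α) * f τ)
      ((b - t) ^ (-α) * ((b - t) * rightRLMeanDeriv a b α f t - (1 - α) * rightRLMean b α f t))
      t := by
  have hbt : 0 < b - t := sub_pos.2 ht.2
  have hpow : HasDerivAt (fun s => (b - s) ^ (1 - α)) (-((1 - α) * (b - t) ^ (-α))) t := by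
    have := (Real.hasDerivAt_rpow_const (p := 1 - α) (Or.inl hbt.ne')).comp t
      ((hasDerivAt_id t).const_sub b)
    exact this.congr_deriv (by rw [sub_sub_cancel_left]; ring)
  have hprod := (hpow.mul (hasDerivAt_rightRLMean hα hf ht)).congr_of_eventuallyEq
    (eventually_of_mem (Iio_mem_nhds ht.2) fun s hs => integral_rpow_sub_mul_eq hs f)
  refine hprod.congr_deriv ?_
  rw [show 1 - α = 1 + -α by ring, Real.rpow_add hbt, Real.rpow_one]
  ring

lemma norm_rightRLMeanDeriv_le {M : ℝ} (hM : ∀ x ∈ Icc a b, ‖derivWithin f (Icc a b) x‖ ≤ M)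
    (hα : α < 1) (ht : t ∈ Icc a b) :
    ‖rightRLMeanDeriv a b α f t‖ ≤ M / (1 - α) :=
  norm_integral_rpow_neg_mul_le hα fun _ hv =>
    norm_one_sub_mul_le (Ioc_subset_Icc_self hv)
      (hM _ (add_sub_mul_mem_Icc ht (Ioc_subset_Icc_self hv)))

lemma norm_rightRLMean_sub_le {M : ℝ}
    (hM : ∀ x ∈ Icc a b, ‖derivWithin f (Icc a b) x‖ ≤ M) (hα : α < 1)
    (hf : DifferentiableOn ℝ f (Icc a b)) (ht : t ∈ Icc a b) :
    ‖rightRLMean b α f t - f b / (1 - α)‖ ≤ M * (b - t) / (1 - α) := by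
  have hb : b ∈ Icc a b := ⟨ht.1.trans ht.2, le_rfl⟩
  have hM0 : 0 ≤ M := (norm_nonneg _).trans (hM b hb)
  rw [← integral_rpow_neg_mul_const hα (f b), rightRLMean, ← intervalIntegral.integral_sub
    (intervalIntegrable_rpow_neg_mul hα (hf.continuousOn.comp_add_sub_mul ht))
    (intervalIntegrable_rpow_neg_mul hα continuousOn_const)]
  simp_rw [← mul_sub]
  refine norm_integral_rpow_neg_mul_le hα fun v hv => ?_
  have hx := add_sub_mul_mem_Icc ht (Ioc_subset_Icc_self hv)
  calc ‖f (t + (b - t) * v) - f b‖ ≤ M * ‖t + (b - t) * v - b‖ :=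
        (convex_Icc a b).norm_image_sub_le_of_norm_derivWithin_le hf hM hb hx
    _ ≤ M * (b - t) := by
        refine mul_le_mul_of_nonneg_left ?_ hM0
        rw [Real.norm_eq_abs, abs_le]
        constructor <;> nlinarith [ht.2, hv.1, hv.2]

lemma tendsto_sub_nhdsLT_nhdsGT_zero (b : ℝ) : Tendsto (fun t => b - t) (𝓝[<] b) (𝓝[>] 0) :=
  tendsto_nhdsWithin_of_tendsto_nhds_of_eventually_within _
    (((continuous_const.sub continuous_id).tendsto' b 0 (sub_self b)).mono_left
      nhdsWithin_le_nhds)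
    (eventually_nhdsWithin_of_forall fun _ ht => mem_Ioi.2 (sub_pos.2 ht))

lemma tendsto_rightRL_bracket (hab : a < b) (hα : α < 1) (hf : ContDiffOn ℝ 1 f (Icc a b)) :
    Tendsto (fun t => (b - t) * rightRLMeanDeriv a b α f t - (1 - α) * rightRLMean b α f t)
      (𝓝[<] b) (𝓝 (-f b)) := by
  obtain ⟨M, hM⟩ := isCompact_Icc.exists_bound_of_continuousOn
    (hf.continuousOn_derivWithin (uniqueDiffOn_Icc hab) le_rfl)
  have hsub : Tendsto (fun t => b - t) (𝓝[<] b) (𝓝 0) :=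
    (tendsto_sub_nhdsLT_nhdsGT_zero b).mono_right nhdsWithin_le_nhds
  have hIcc : ∀ᶠ t in 𝓝[<] b, t ∈ Icc a b :=
    eventually_of_mem (Ico_mem_nhdsLT hab) fun _ ht => Ico_subset_Icc_self ht
  have hQ : Tendsto (fun t => (b - t) * rightRLMeanDeriv a b α f t) (𝓝[<] b) (𝓝 0) :=
    hsub.zero_mul_isBoundedUnder_le
      ⟨M / (1 - α), eventually_map.2 (hIcc.mono fun _ ht => norm_rightRLMeanDeriv_le hM hα ht)⟩
  have hP : Tendsto (rightRLMean b α f) (𝓝[<] b) (𝓝 (f b / (1 - α))) := by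
    rw [tendsto_iff_norm_sub_tendsto_zero]
    refine squeeze_zero' (Eventually.of_forall fun _ => norm_nonneg _)
      (hIcc.mono fun _ ht => norm_rightRLMean_sub_le hM hα (hf.differentiableOn one_ne_zero) ht) ?_
    simpa using (hsub.const_mul M).div_const (1 - α)
  have hlim := hQ.sub (hP.const_mul (1 - α))
  rwa [zero_sub, mul_div_cancel₀ _ (sub_ne_zero.2 hα.ne')] at hlim

theorem tendsto_abs_rightRL_atTop (hab : a < b) (hα0 : 0 < α) (hα1 : α < 1)
    (hf : ContDiffOn ℝ 1 f (Icc a b)) (hfb : f b ≠ 0) :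
    Tendsto (fun t => |rightRL b α f t|) (𝓝[<] b) atTop := by
  have hc : 0 < |-1 / Real.Gamma (1 - α)| :=
    abs_pos.2 (div_ne_zero (by norm_num) (Real.Gamma_pos_of_pos (by linarith)).ne')
  have hpow : Tendsto (fun t => (b - t) ^ (-α)) (𝓝[<] b) atTop :=
    (tendsto_rpow_neg_nhdsGT_zero (neg_neg_of_pos hα0)).comp (tendsto_sub_nhdsLT_nhdsGT_zero b)
  refine (hpow.atTop_mul_pos (mul_pos hc (abs_pos.2 (neg_ne_zero.2 hfb)))
    ((tendsto_rightRL_bracket hab hα1 hf).abs.const_mul _)).congr' ?_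
  filter_upwards [Ioo_mem_nhdsLT hab] with t ht
  rw [rightRL, (hasDerivAt_integral_rpow_sub_mul hα1 hf ht).deriv, abs_mul, abs_mul,
    abs_of_nonneg (Real.rpow_nonneg (sub_pos.2 ht.2).le _)]
  ring

end

/-- If `f` is continuously differentiable on `[a,b]` and `f(b) ≠ 0`, then the right
Riemann–Liouville fractional derivative `ₜD_b^α f(t)` blows up as `t → b⁻`.
Consequently, if `t ↦ ₜD_b^α f(t)` exists on `[a,b)` and extends to a continuous
function on all of `[a,b]`, then `f(b) = 0`. -/
theorem rightRL_blowup_of_ne_zero_at_right_endpoint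
    (a b α : ℝ) (hab : a < b) (hα0 : 0 < α) (hα1 : α < 1)
    (f : ℝ → ℝ) (hf : ContDiffOn ℝ 1 f (Set.Icc a b)) :
    (f b ≠ 0 →
      Filter.Tendsto (fun t => |rightRL b α f t|) (nhdsWithin b (Set.Iio b))
        Filter.atTop) ∧
    (∀ g : ℝ → ℝ,
      (∀ t ∈ Set.Ico a b,
        DifferentiableAt ℝ (fun s => ∫ τ in s..b, (τ - s) ^ (-α) * f τ) t) →
      ContinuousOn g (Set.Icc a b) →
      (∀ t ∈ Set.Ico a b, g t = rightRL b α f t) →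
      f b = 0) := by
  refine ⟨tendsto_abs_rightRL_atTop hab hα0 hα1 hf, fun g _ hg hgD => ?_⟩
  by_contra hfb
  have hgb : Tendsto g (𝓝[<] b) (𝓝 (g b)) := by
    rw [← nhdsWithin_Ico_eq_nhdsLT hab]
    exact (hg b ⟨hab.le, le_rfl⟩).mono Ico_subset_Icc_self
  refine not_tendsto_nhds_of_tendsto_atTop
    ((tendsto_abs_rightRL_atTop hab hα0 hα1 hf hfb).congr' ?_) _ hgb.abs
  filter_upwards [Ico_mem_nhdsLT hab] with t ht
  rw [hgD t ht]
end

section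
/- Let 0 < α < 1, k ∈ ℝ, ξ ∈ ℝ, and define y : [0,1] → ℝ by y(t) = ∫_0^t E_{1−α,1}(−k·(t−τ)^{1−α}) · ξ dτ. Then y(0) = 0, y is differentiable on (0,1], its left Riemann–Liouville fractional derivative ₀D_t^α y(t) exists for t ∈ (0,1], and y satisfies the fractional differential equation y'(t) + k · ₀D_t^α y(t) = ξ for all t ∈ (0,1]. -/
/-!
Write `γ = 1 - α`. Expanding the Mittag-Leffler function termwise and integrating each power
against the Riemann–Liouville kernel with the Beta integral gives the closed forms
`y t = ξ t E_{γ,2}(-k t^γ)` and `∫₀ᵗ (t - τ)^{-α} y τ dτ = ξ Γ(γ) t^{γ+1} E_{γ,γ+2}(-k t^γ)`.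
Termwise differentiation, `d/dt (t^{β-1} E_{γ,β}(c t^γ)) = t^{β-2} E_{γ,β-1}(c t^γ)`, reduces the
equation to the recurrence `E_{γ,1}(z) = 1 + z E_{γ,γ+1}(z)`. All interchanges of sums with
integrals and derivatives are justified by the growth bound `Γ x ≥ c R^x` (for each `R ≥ 1`),
which makes every series `∑ Cⁿ / Γ(γ n + b)` converge.
-/

open MeasureTheory intervalIntegral Set Filter

/-- The Mittag–Leffler function `E_{α,β}(z) = Σ_{n=0}^∞ zⁿ / Γ(αn + β)`. -/
noncomputable def mittagLeffler (α β z : ℝ) : ℝ :=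
  ∑' n : ℕ, z ^ n / Real.Gamma (α * n + β)

lemma Real.rpow_mul_natCast_add {r : ℝ} (hr : 0 < r) (γ δ : ℝ) (n : ℕ) :
    r ^ (γ * n + δ) = (r ^ γ) ^ n * r ^ δ := by
  rw [Real.rpow_add hr, Real.rpow_mul hr.le, Real.rpow_natCast]

lemma Real.rpow_le_rpow_add_rpow {a s b : ℝ} (ha : 0 < a) (has : a ≤ s) (hsb : s ≤ b) (e : ℝ) :
    s ^ e ≤ a ^ e + b ^ e := by
  rcases le_total 0 e with he | he
  · linarith [Real.rpow_le_rpow (by linarith) hsb he, Real.rpow_nonneg ha.le e]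
  · linarith [Real.rpow_le_rpow_of_nonpos ha has he,
      Real.rpow_nonneg (ha.trans_le (has.trans hsb)).le e]

lemma exists_pos_mul_rpow_le_Gamma {R : ℝ} (hR : 1 ≤ R) :
    ∃ c > 0, ∀ x : ℝ, 0 < x → c * R ^ x ≤ Real.Gamma x := by
  obtain ⟨x₀, hx₀, hmin⟩ := Real.exists_isMinOn_Gamma_Ioi
  have hR0 : 0 < R := by linarith
  have hm : 0 < Real.Gamma x₀ := Real.Gamma_pos_of_pos (by linarith [hx₀.1])
  set c := Real.Gamma x₀ / R ^ (R + 1)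
  refine ⟨c, by positivity, fun x hx ↦ ?_⟩
  -- below `R + 1` the minimum of `Γ` suffices; above, `Γ x = (x - 1) Γ (x - 1) ≥ R Γ (x - 1)`
  have key : ∀ n : ℕ, ∀ x : ℝ, 0 < x → x ≤ R + 1 + n → c * R ^ x ≤ Real.Gamma x := by
    intro n
    induction n with
    | zero =>
      intro x hx hxR
      calc c * R ^ x ≤ c * R ^ (R + 1) := by
            gcongr
            simpa using hxR
        _ = Real.Gamma x₀ := by simp only [c]; field_simp
        _ ≤ Real.Gamma x := hmin hx
    | succ n ih =>
      intro x hx hxR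
      rcases le_or_gt x (R + 1 + n) with hle | hgt
      · exact ih x hx hle
      have hx1 : R ≤ x - 1 := by linarith [(Nat.cast_nonneg n : (0:ℝ) ≤ n)]
      have hpos : 0 < x - 1 := by linarith
      calc c * R ^ x = R * (c * R ^ (x - 1)) := by
            rw [Real.rpow_sub_one hR0.ne']; field_simp
        _ ≤ (x - 1) * Real.Gamma (x - 1) := by
            gcongr
            exact ih _ hpos (by push_cast at hxR; linarith)
        _ = Real.Gamma x := by rw [← Real.Gamma_add_one hpos.ne']; ring_nf
  exact key ⌈x⌉₊ x hx (by linarith [Nat.le_ceil x])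

lemma summable_pow_div_Gamma {γ b : ℝ} (hγ : 0 < γ) (hb : 0 < b) (C : ℝ) :
    Summable fun n : ℕ ↦ C ^ n / Real.Gamma (γ * n + b) := by
  set R := (2 * |C| + 1) ^ γ⁻¹
  have hRγ : R ^ γ = 2 * |C| + 1 := Real.rpow_inv_rpow (by positivity) hγ.ne'
  have hR : 1 ≤ R := Real.one_le_rpow (by linarith [abs_nonneg C]) (by positivity)
  obtain ⟨c, hc, hΓ⟩ := exists_pos_mul_rpow_le_Gamma hR
  have hratio : |C| / (2 * |C| + 1) ≤ 1 / 2 := by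
    rw [div_le_iff₀ (by positivity)]; linarith [abs_nonneg C]
  refine Summable.of_norm_bounded
    (summable_geometric_two.mul_left (c * R ^ b)⁻¹) fun n ↦ ?_
  have hx : 0 < γ * n + b := by positivity
  have hlow : c * R ^ b * (2 * |C| + 1) ^ n ≤ Real.Gamma (γ * n + b) := by
    have := hΓ _ hx
    rwa [Real.rpow_mul_natCast_add (by linarith), hRγ, mul_comm ((2 * |C| + 1) ^ n),
      ← mul_assoc] at this
  rw [norm_div, norm_pow, Real.norm_eq_abs, Real.norm_of_nonneg (Real.Gamma_pos_of_pos hx).le]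
  calc |C| ^ n / Real.Gamma (γ * n + b)
      ≤ |C| ^ n / (c * R ^ b * (2 * |C| + 1) ^ n) := by gcongr
    _ = (c * R ^ b)⁻¹ * (|C| / (2 * |C| + 1)) ^ n := by rw [div_pow]; field_simp
    _ ≤ (c * R ^ b)⁻¹ * (1 / 2) ^ n := by gcongr

lemma integral_rpow_mul_sub_rpow {p q a : ℝ} (hp : 0 < p) (hq : 0 < q) (ha : 0 < a) :
    ∫ x in (0:ℝ)..a, x ^ (p - 1) * (a - x) ^ (q - 1) =
      Real.Gamma p * Real.Gamma q / Real.Gamma (p + q) * a ^ (p + q - 1) := by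
  have hΓ : (Real.Gamma (p + q) : ℂ) ≠ 0 :=
    Complex.ofReal_ne_zero.mpr (Real.Gamma_pos_of_pos (by linarith)).ne'
  have hbeta := Complex.Gamma_mul_Gamma_eq_betaIntegral (s := p) (t := q)
    (by simpa using hp) (by simpa using hq)
  rw [← Complex.ofReal_add, Complex.Gamma_ofReal, Complex.Gamma_ofReal, Complex.Gamma_ofReal]
    at hbeta
  apply Complex.ofReal_injective
  rw [← intervalIntegral.integral_ofReal]
  have hcongr : ∀ x ∈ uIcc 0 a, (((x ^ (p - 1) * (a - x) ^ (q - 1) : ℝ)) : ℂ) =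
      (x : ℂ) ^ ((p : ℂ) - 1) * ((a : ℂ) - x) ^ ((q : ℂ) - 1) := by
    intro x hx
    rw [uIcc_of_le ha.le] at hx
    rw [Complex.ofReal_mul, Complex.ofReal_cpow hx.1, Complex.ofReal_cpow (by linarith [hx.2])]
    push_cast; ring
  rw [intervalIntegral.integral_congr hcongr, Complex.betaIntegral_scaled _ _ ha,
    Complex.ofReal_mul, Complex.ofReal_div, Complex.ofReal_mul, hbeta,
    Complex.ofReal_cpow ha.le]
  field_simp
  push_cast; ring

lemma hasSum_mittagLeffler_rpow {γ β : ℝ} (hγ : 0 < γ) (hβ : 0 < β) (c : ℝ) {r : ℝ}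
    (hr : 0 < r) :
    HasSum (fun n : ℕ ↦ c ^ n / Real.Gamma (γ * n + β) * r ^ (γ * n + β - 1))
      (r ^ (β - 1) * mittagLeffler γ β (c * r ^ γ)) := by
  refine ((summable_pow_div_Gamma hγ hβ (c * r ^ γ)).hasSum.mul_left _).congr_fun fun n ↦ ?_
  rw [add_sub_assoc, Real.rpow_mul_natCast_add hr, mul_pow]
  ring

lemma mittagLeffler_eq_one_div_Gamma_add_mul {γ β : ℝ} (hγ : 0 < γ) (hβ : 0 < β) (z : ℝ) :
    mittagLeffler γ β z = 1 / Real.Gamma β + z * mittagLeffler γ (γ + β) z := by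
  rw [mittagLeffler, (summable_pow_div_Gamma hγ hβ z).tsum_eq_zero_add, mittagLeffler,
    ← tsum_mul_left]
  congr 1
  · simp
  · congr 1; funext n
    push_cast
    rw [pow_succ]; ring_nf

lemma integral_sub_rpow_mul_rpow_mul_mittagLeffler {γ β μ : ℝ} (hγ : 0 < γ) (hβ : 0 < β)
    (hμ : 0 < μ) (c : ℝ) {s : ℝ} (hs : 0 < s) :
    ∫ τ in (0:ℝ)..s, (s - τ) ^ (μ - 1) * (τ ^ (β - 1) * mittagLeffler γ β (c * τ ^ γ)) =
      Real.Gamma μ * (s ^ (β + μ - 1) * mittagLeffler γ (β + μ) (c * s ^ γ)) := by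
  have hp : ∀ n : ℕ, 0 < γ * n + β := fun n ↦ by positivity
  have hbeta : ∀ n : ℕ, ∫ τ in (0:ℝ)..s, τ ^ (γ * n + β - 1) * (s - τ) ^ (μ - 1) =
      Real.Gamma (γ * n + β) * Real.Gamma μ / Real.Gamma (γ * n + (β + μ)) *
        s ^ (γ * n + (β + μ) - 1) := fun n ↦ by
    rw [integral_rpow_mul_sub_rpow (hp n) hμ hs, ← add_assoc]
  set F : ℝ → ℕ → ℝ → ℝ := fun c' n τ ↦
    c' ^ n / Real.Gamma (γ * n + β) * (τ ^ (γ * n + β - 1) * (s - τ) ^ (μ - 1))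
  have hF_integral : ∀ c' n, ∫ τ in Ioc 0 s, F c' n τ =
      Real.Gamma μ * (c' ^ n / Real.Gamma (γ * n + (β + μ)) * s ^ (γ * n + (β + μ) - 1)) := by
    intro c' n
    rw [← integral_of_le hs.le, intervalIntegral.integral_const_mul, hbeta]
    have := (Real.Gamma_pos_of_pos (hp n)).ne'
    field_simp
  have hF_int : ∀ n, Integrable (F c n) (volume.restrict (Ioc 0 s)) := by
    intro n
    -- the Beta integrand is integrable because its integral is nonzero
    refine Integrable.const_mul ?_ _
    refine (intervalIntegrable_iff_integrableOn_Ioc_of_le hs.le).mp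
      (intervalIntegrable_of_integral_ne_zero ?_)
    rw [hbeta]
    have := Real.Gamma_pos_of_pos (hp n)
    have := Real.Gamma_pos_of_pos hμ
    have := Real.Gamma_pos_of_pos (by positivity : 0 < γ * n + (β + μ))
    positivity
  have hF_norm : ∀ n, ∫ τ in Ioc 0 s, ‖F c n τ‖ = ∫ τ in Ioc 0 s, F |c| n τ := by
    intro n
    refine setIntegral_congr_fun measurableSet_Ioc fun τ hτ ↦ ?_
    have hΓ := Real.Gamma_pos_of_pos (hp n)
    have hpow := Real.rpow_nonneg hτ.1.le (γ * n + β - 1)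
    have hkernel := Real.rpow_nonneg (sub_nonneg.mpr hτ.2) (μ - 1)
    simp only [F, norm_mul, norm_div, norm_pow, Real.norm_eq_abs, abs_of_pos hΓ,
      abs_of_nonneg hpow, abs_of_nonneg hkernel]
  have hsum := hasSum_integral_of_summable_integral_norm hF_int (by
    simp_rw [hF_norm, hF_integral]
    exact ((hasSum_mittagLeffler_rpow hγ (by positivity) |c| hs).summable.mul_left _))
  simp_rw [hF_integral] at hsum
  rw [integral_of_le hs.le, (hsum.unique
    ((hasSum_mittagLeffler_rpow hγ (by positivity) c hs).mul_left _)).symm]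
  refine setIntegral_congr_fun measurableSet_Ioc fun τ hτ ↦ ?_
  rw [mul_comm, ← ((hasSum_mittagLeffler_rpow hγ hβ c hτ.1).mul_right _).tsum_eq]
  simp only [F, mul_assoc]

lemma integral_mittagLeffler_mul_sub_rpow {γ : ℝ} (hγ : 0 < γ) (c : ℝ) {s : ℝ} (hs : 0 < s) :
    ∫ τ in (0:ℝ)..s, mittagLeffler γ 1 (c * (s - τ) ^ γ) =
      s * mittagLeffler γ 2 (c * s ^ γ) := by
  have h := integral_sub_rpow_mul_rpow_mul_mittagLeffler hγ one_pos one_pos c hs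
  norm_num at h
  rw [intervalIntegral.integral_comp_sub_left (fun τ ↦ mittagLeffler γ 1 (c * τ ^ γ)) s]
  norm_num [h]

lemma hasDerivAt_rpow_mul_mittagLeffler {γ β : ℝ} (hγ : 0 < γ) (hβ : 1 < β) (c : ℝ) {t : ℝ}
    (ht : 0 < t) :
    HasDerivAt (fun s ↦ s ^ (β - 1) * mittagLeffler γ β (c * s ^ γ))
      (t ^ (β - 2) * mittagLeffler γ (β - 1) (c * t ^ γ)) t := by
  have hβ' : 0 < β - 1 := by linarith
  set g : ℕ → ℝ → ℝ := fun n s ↦ c ^ n / Real.Gamma (γ * n + β) * s ^ (γ * n + β - 1)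
  set g' : ℕ → ℝ → ℝ := fun n s ↦
    c ^ n / Real.Gamma (γ * n + (β - 1)) * s ^ (γ * n + (β - 1) - 1)
  have hg : ∀ n, ∀ s ∈ Ioo (t / 2) (2 * t), HasDerivAt (g n) (g' n s) s := by
    intro n s hs
    have hpos : 0 < γ * n + (β - 1) := by positivity
    refine ((Real.hasDerivAt_rpow_const (p := γ * n + β - 1)
      (Or.inl (by linarith [hs.1] : s ≠ 0))).const_mul _).congr_deriv ?_
    simp only [g']
    rw [show γ * n + β - 1 - 1 = γ * n + (β - 1) - 1 by ring,
      show γ * n + β = γ * n + (β - 1) + 1 by ring, Real.Gamma_add_one hpos.ne']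
    have := (Real.Gamma_pos_of_pos hpos).ne'
    field_simp
    ring
  set u : ℕ → ℝ := fun n ↦ |c| ^ n / Real.Gamma (γ * n + (β - 1)) *
    (t / 2) ^ (γ * n + (β - 1) - 1) +
      |c| ^ n / Real.Gamma (γ * n + (β - 1)) * (2 * t) ^ (γ * n + (β - 1) - 1)
  have hu : Summable u :=
    (hasSum_mittagLeffler_rpow hγ hβ' |c| (by positivity : 0 < t / 2)).summable.add
      (hasSum_mittagLeffler_rpow hγ hβ' |c| (by positivity : 0 < 2 * t)).summable
  have hg'u : ∀ n, ∀ s ∈ Ioo (t / 2) (2 * t), ‖g' n s‖ ≤ u n := by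
    intro n s hs
    have hΓ := Real.Gamma_pos_of_pos (by positivity : 0 < γ * n + (β - 1))
    rw [norm_mul, norm_div, norm_pow, Real.norm_eq_abs, Real.norm_of_nonneg hΓ.le,
      Real.norm_of_nonneg (Real.rpow_nonneg (by linarith [hs.1]) _)]
    simp only [u, ← mul_add]
    gcongr
    exact Real.rpow_le_rpow_add_rpow (by positivity) hs.1.le hs.2.le _
  have hderiv := hasDerivAt_tsum_of_isPreconnected hu isOpen_Ioo isPreconnected_Ioo hg hg'u
    (y₀ := t) (y := t) ⟨by linarith, by linarith⟩
    (hasSum_mittagLeffler_rpow hγ (by linarith) c ht).summable ⟨by linarith, by linarith⟩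
  rw [(hasSum_mittagLeffler_rpow hγ hβ' c ht).tsum_eq, show β - 1 - 1 = β - 2 by ring]
    at hderiv
  refine hderiv.congr_of_eventuallyEq ?_
  filter_upwards [lt_mem_nhds ht] with s hs
  exact (hasSum_mittagLeffler_rpow hγ (by linarith) c hs).tsum_eq.symm

theorem mittagLeffler_solves_fractional_ode_general
    (α k ξ : ℝ) (hα1 : α < 1)
    (y : ℝ → ℝ)
    (hy : ∀ t, y t =
      ∫ τ in (0:ℝ)..t, mittagLeffler (1 - α) 1 (-k * (t - τ) ^ (1 - α)) * ξ) :
    y 0 = 0 ∧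
    (∀ t ∈ Set.Ioc (0:ℝ) 1, DifferentiableAt ℝ y t) ∧
    (∀ t ∈ Set.Ioc (0:ℝ) 1,
      DifferentiableAt ℝ (fun s => ∫ τ in (0:ℝ)..s, (s - τ) ^ (-α) * y τ) t) ∧
    (∀ t ∈ Set.Ioc (0:ℝ) 1, deriv y t + k * leftRL 0 α y t = ξ) := by
  have hγ : 0 < 1 - α := by linarith
  have hy_eq : ∀ s > 0,
      y s = ξ * (s ^ ((2:ℝ) - 1) * mittagLeffler (1 - α) 2 (-k * s ^ (1 - α))) := fun s hs ↦ by
    rw [hy, intervalIntegral.integral_mul_const, integral_mittagLeffler_mul_sub_rpow hγ _ hs]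
    norm_num [mul_comm]
  have hF_eq : ∀ s > 0, ∫ τ in (0:ℝ)..s, (s - τ) ^ (-α) * y τ = ξ * Real.Gamma (1 - α) *
      (s ^ (2 + (1 - α) - 1) * mittagLeffler (1 - α) (2 + (1 - α)) (-k * s ^ (1 - α))) := by
    intro s hs
    rw [mul_assoc, ← integral_sub_rpow_mul_rpow_mul_mittagLeffler hγ two_pos hγ _ hs,
      ← intervalIntegral.integral_const_mul, integral_of_le hs.le, integral_of_le hs.le]
    refine setIntegral_congr_fun measurableSet_Ioc fun τ hτ ↦ ?_
    rw [hy_eq τ hτ.1, sub_sub_cancel_left]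
    ring
  have hy' : ∀ t > 0, HasDerivAt y
      (ξ * (t ^ ((2:ℝ) - 2) * mittagLeffler (1 - α) (2 - 1) (-k * t ^ (1 - α)))) t :=
    fun t ht ↦ ((hasDerivAt_rpow_mul_mittagLeffler hγ one_lt_two _ ht).const_mul ξ)
      |>.congr_of_eventuallyEq (eventually_of_mem (lt_mem_nhds ht) hy_eq)
  have hF' : ∀ t > 0, HasDerivAt (fun s ↦ ∫ τ in (0:ℝ)..s, (s - τ) ^ (-α) * y τ)
      (ξ * Real.Gamma (1 - α) * (t ^ (2 + (1 - α) - 2) *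
        mittagLeffler (1 - α) (2 + (1 - α) - 1) (-k * t ^ (1 - α)))) t :=
    fun t ht ↦ ((hasDerivAt_rpow_mul_mittagLeffler hγ (by linarith) _ ht).const_mul _)
      |>.congr_of_eventuallyEq (eventually_of_mem (lt_mem_nhds ht) hF_eq)
  refine ⟨by simp [hy], fun t ht ↦ (hy' t ht.1).differentiableAt,
    fun t ht ↦ (hF' t ht.1).differentiableAt, fun t ht ↦ ?_⟩
  rw [leftRL, (hy' t ht.1).deriv, (hF' t ht.1).deriv,
    mittagLeffler_eq_one_div_Gamma_add_mul hγ (by norm_num)]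
  have hΓ := (Real.Gamma_pos_of_pos hγ).ne'
  norm_num [show 2 + (1 - α) - 2 = 1 - α by ring, show 2 + (1 - α) - 1 = 1 - α + 1 by ring]
  field_simp
  ring

/-- The function `y(t) = ∫_0^t E_{1−α,1}(−k (t−τ)^{1−α}) ξ dτ` satisfies `y(0) = 0`,
is differentiable on `(0,1]`, its left Riemann–Liouville fractional derivative
`₀D_t^α y` exists there, and solves `y'(t) + k ₀D_t^α y(t) = ξ` on `(0,1]`. -/
theorem mittagLeffler_solves_fractional_ode
    (α k ξ : ℝ) (hα0 : 0 < α) (hα1 : α < 1)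
    (y : ℝ → ℝ)
    (hy : ∀ t, y t =
      ∫ τ in (0:ℝ)..t, mittagLeffler (1 - α) 1 (-k * (t - τ) ^ (1 - α)) * ξ) :
    y 0 = 0 ∧
    (∀ t ∈ Set.Ioc (0:ℝ) 1, DifferentiableAt ℝ y t) ∧
    (∀ t ∈ Set.Ioc (0:ℝ) 1,
      DifferentiableAt ℝ (fun s => ∫ τ in (0:ℝ)..s, (s - τ) ^ (-α) * y τ) t) ∧
    (∀ t ∈ Set.Ioc (0:ℝ) 1, deriv y t + k * leftRL 0 α y t = ξ) :=
  mittagLeffler_solves_fractional_ode_general α k ξ hα1 y hy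
end

section
/- Let ξ ∈ ℝ and k ∈ ℝ with |k| < 1, and for α ∈ (0,1) define y_α(t) = ∫_0^t E_{1−α,1}(−k·(t−τ)^{1−α}) · ξ dτ for t ∈ [0,1]. Then for every fixed t ∈ (0,1], the limit as α → 1⁻ of y_α(t) equals ξ·t/(k+1), the minimizer of the limiting classical problem min ∫_0^1 (k+1)² y'(t)² dt subject to y(0) = 0, y(1) = ξ/(k+1). -/
open MeasureTheory intervalIntegral Set Filter Topology

/-!
Since `Γ ≥ e⁻¹` on `[1, ∞)`, the `n`-th term of `E_{β,1}(z)` is at most `e rⁿ` whenever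
`β ≥ 0` and `|z| ≤ r < 1`. Hence `(β, z) ↦ E_{β,1}(z)` is continuous on `[0, ∞) × [-r, r]` and
bounded there, so as `α → 1⁻` the integrand tends to `E_{0,1}(-k) = 1/(1+k)` for every `τ < t`
under a uniform bound, and dominated convergence gives the limit `ξ t/(1+k)`. Minimality of the
linear function is Cauchy–Schwarz: `(z 1 - z 0)² ≤ ∫₀¹ z'²`.
-/

open Metric

open Real in
theorem Real.exp_neg_one_le_Gamma {x : ℝ} (hx : 1 ≤ x) : exp (-1) ≤ Gamma x := by
  have hx0 : 0 < x := by linarith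
  have hconv := GammaIntegral_convergent hx0
  calc exp (-1) = ∫ u in Ioi 1, exp (-u) := (integral_exp_neg_Ioi 1).symm
    _ ≤ ∫ u in Ioi 1, exp (-u) * u ^ (x - 1) :=
        setIntegral_mono_on (integrableOn_exp_neg_Ioi 1)
          (hconv.mono_set (Ioi_subset_Ioi zero_le_one)) measurableSet_Ioi fun u hu =>
          le_mul_of_one_le_right (exp_pos _).le (one_le_rpow (le_of_lt hu) (by linarith))
    _ ≤ ∫ u in Ioi 0, exp (-u) * u ^ (x - 1) := by
        refine setIntegral_mono_set hconv ?_ (Ioi_subset_Ioi zero_le_one).eventuallyLE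
        filter_upwards [ae_restrict_mem measurableSet_Ioi] with u hu
        exact mul_nonneg (exp_pos _).le (rpow_nonneg (le_of_lt hu) _)
    _ = Gamma x := (Gamma_eq_integral hx0).symm

lemma norm_pow_div_Gamma_le {α β z r : ℝ} (hα : 0 ≤ α) (hβ : 1 ≤ β) (hz : ‖z‖ ≤ r) (n : ℕ) :
    ‖z ^ n / Real.Gamma (α * n + β)‖ ≤ r ^ n * Real.exp 1 := by
  have hx : 1 ≤ α * n + β := le_add_of_nonneg_of_le (by positivity) hβ
  have hΓ := Real.exp_neg_one_le_Gamma hx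
  rw [norm_div, norm_pow, Real.norm_of_nonneg (hΓ.trans' (Real.exp_pos _).le), div_eq_mul_inv]
  refine mul_le_mul (pow_le_pow_left₀ (norm_nonneg _) hz n) ?_ (by positivity)
    (pow_nonneg ((norm_nonneg z).trans hz) n)
  exact inv_le_of_inv_le₀ (Real.exp_pos _) (by rwa [← Real.exp_neg])

lemma norm_mittagLeffler_le {α β z r : ℝ} (hα : 0 ≤ α) (hβ : 1 ≤ β) (hz : ‖z‖ ≤ r)
    (hr : r < 1) : ‖mittagLeffler α β z‖ ≤ (1 - r)⁻¹ * Real.exp 1 :=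
  tsum_of_norm_bounded ((hasSum_geometric_of_lt_one ((norm_nonneg z).trans hz) hr).mul_right _)
    (norm_pow_div_Gamma_le hα hβ hz)

lemma continuousOn_mittagLeffler {β r : ℝ} (hβ : 1 ≤ β) (hr : r < 1) :
    ContinuousOn (fun p : ℝ × ℝ => mittagLeffler p.1 β p.2) (Ici 0 ×ˢ closedBall 0 r) := by
  obtain hr0 | hr0 := lt_or_ge r 0
  · simp [closedBall_eq_empty.2 hr0]
  refine continuousOn_tsum (fun n => ?_) ((summable_geometric_of_lt_one hr0 hr).mul_right _)
    fun n p hp => norm_pow_div_Gamma_le hp.1 hβ (mem_closedBall_zero_iff.1 hp.2) n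
  have hpos : ∀ p ∈ Ici (0:ℝ) ×ˢ closedBall (0:ℝ) r, 0 < p.1 * (n : ℝ) + β := fun p hp =>
    add_pos_of_nonneg_of_pos (mul_nonneg hp.1 n.cast_nonneg) (by linarith)
  refine (continuous_snd.pow n).continuousOn.div (fun p hp => ?_) fun p hp =>
    (Real.Gamma_pos_of_pos (hpos p hp)).ne'
  refine ContinuousAt.continuousWithinAt ?_
  refine (Real.differentiableAt_Gamma fun m => ?_).continuousAt.comp (by fun_prop)
  linarith [hpos p hp, (m.cast_nonneg : (0:ℝ) ≤ m)]

lemma mittagLeffler_zero_one {z : ℝ} (hz : ‖z‖ < 1) : mittagLeffler 0 1 z = (1 - z)⁻¹ := by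
  simp [mittagLeffler, tsum_geometric_of_norm_lt_one hz]

lemma neg_mul_rpow_mem_closedBall {k s β : ℝ} (hs : s ∈ Icc (0:ℝ) 1) (hβ : 0 ≤ β) :
    -k * s ^ β ∈ closedBall (0:ℝ) |k| := by
  rw [mem_closedBall_zero_iff, norm_mul, norm_neg, Real.norm_eq_abs, Real.norm_eq_abs,
    abs_of_nonneg (Real.rpow_nonneg hs.1 _)]
  exact mul_le_of_le_one_right (abs_nonneg k) (Real.rpow_le_one hs.1 hs.2 hβ)

lemma tendsto_mittagLeffler_rpow {k s : ℝ} (hk : |k| < 1) (hs : s ∈ Ioc (0:ℝ) 1) :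
    Tendsto (fun α => mittagLeffler (1 - α) 1 (-k * s ^ (1 - α))) (𝓝[<] 1) (𝓝 (1 + k)⁻¹) := by
  have hE := (continuousOn_mittagLeffler le_rfl hk (0, -k) ⟨self_mem_Ici, by simp⟩).tendsto
  rw [mittagLeffler_zero_one (by simpa using hk), sub_neg_eq_add] at hE
  refine hE.comp (f := fun α : ℝ => (1 - α, -k * s ^ (1 - α)))
    (tendsto_nhdsWithin_iff.2 ⟨?_, ?_⟩)
  · have : ContinuousAt (fun α : ℝ => (1 - α, -k * s ^ (1 - α))) 1 :=
      (continuousAt_const.sub continuousAt_id).prodMk (continuousAt_const.mul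
        ((Real.continuousAt_const_rpow hs.1.ne').comp (continuousAt_const.sub continuousAt_id)))
    simpa using this.tendsto.mono_left nhdsWithin_le_nhds
  · filter_upwards [self_mem_nhdsWithin] with α hα
    have hβ : 0 ≤ 1 - α := sub_nonneg.2 (le_of_lt hα)
    exact ⟨hβ, neg_mul_rpow_mem_closedBall (Ioc_subset_Icc_self hs) hβ⟩

lemma tendsto_integral_mittagLeffler_rpow {k t : ℝ} (hk : |k| < 1) (ht : t ∈ Ioc (0:ℝ) 1) :
    Tendsto (fun α => ∫ τ in (0:ℝ)..t, mittagLeffler (1 - α) 1 (-k * (t - τ) ^ (1 - α)))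
      (𝓝[<] 1) (𝓝 (t * (1 + k)⁻¹)) := by
  obtain ⟨ht0, ht1⟩ := ht
  have hsub : ∀ τ ∈ Icc 0 t, t - τ ∈ Icc (0:ℝ) 1 := fun τ hτ =>
    ⟨sub_nonneg.2 hτ.2, by linarith [hτ.1]⟩
  have hmaps : ∀ α < (1:ℝ), MapsTo (fun τ => (1 - α, -k * (t - τ) ^ (1 - α))) (Icc 0 t)
      (Ici 0 ×ˢ closedBall 0 |k|) := fun α hα τ hτ =>
    ⟨sub_nonneg.2 hα.le, neg_mul_rpow_mem_closedBall (hsub τ hτ) (sub_nonneg.2 hα.le)⟩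
  have hconst : ∫ _ in (0:ℝ)..t, (1 + k)⁻¹ = t * (1 + k)⁻¹ := by simp
  rw [← hconst]
  refine intervalIntegral.tendsto_integral_filter_of_dominated_convergence
    (fun _ => (1 - |k|)⁻¹ * Real.exp 1) ?_ ?_ intervalIntegrable_const ?_
  · filter_upwards [self_mem_nhdsWithin] with α hα
    have hcont : ContinuousOn (fun τ => mittagLeffler (1 - α) 1 (-k * (t - τ) ^ (1 - α)))
        (Icc 0 t) :=
      (continuousOn_mittagLeffler le_rfl hk).comp (Continuous.continuousOn (by
        refine continuous_const.prodMk (continuous_const.mul ?_)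
        exact (continuous_const.sub continuous_id).rpow_const fun _ =>
          Or.inr (sub_nonneg.2 (le_of_lt hα)))) (hmaps α hα)
    rw [uIoc_of_le ht0.le]
    exact (hcont.mono Ioc_subset_Icc_self).aestronglyMeasurable measurableSet_Ioc
  · filter_upwards [self_mem_nhdsWithin] with α hα
    refine ae_of_all _ fun τ hτ => ?_
    rw [uIoc_of_le ht0.le] at hτ
    exact norm_mittagLeffler_le (sub_nonneg.2 (le_of_lt hα)) le_rfl
      (mem_closedBall_zero_iff.1 (hmaps α hα (Ioc_subset_Icc_self hτ)).2) hk
  -- at `τ = t` the integrand is `E_{1-α,1}(0) = 1` for every `α < 1`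
  · filter_upwards [Measure.ae_ne volume t] with τ hτt hτ
    rw [uIoc_of_le ht0.le] at hτ
    exact tendsto_mittagLeffler_rpow hk
      ⟨sub_pos.2 (lt_of_le_of_ne hτ.2 hτt), by linarith [hτ.1]⟩

lemma sq_integral_le_mul_integral_sq {g : ℝ → ℝ} {a b : ℝ} (hab : a ≤ b)
    (hg : IntervalIntegrable g volume a b)
    (hg2 : IntervalIntegrable (fun x => g x ^ 2) volume a b) :
    (∫ x in a..b, g x) ^ 2 ≤ (b - a) * ∫ x in a..b, g x ^ 2 := by
  have hquad : ∀ c : ℝ, 0 ≤ (b - a) * (c * c) + (-2 * ∫ x in a..b, g x) * c +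
      ∫ x in a..b, g x ^ 2 := fun c => by
    have hexp : ∫ x in a..b, (g x - c) ^ 2 = (b - a) * (c * c) + (-2 * ∫ x in a..b, g x) * c +
        ∫ x in a..b, g x ^ 2 := by
      have hpoint : (fun x => (g x - c) ^ 2) = fun x => g x ^ 2 + (-2 * c) * g x + c * c := by
        ext x; ring
      rw [hpoint,
        intervalIntegral.integral_add (hg2.add (hg.const_mul _)) intervalIntegrable_const,
        intervalIntegral.integral_add hg2 (hg.const_mul _), intervalIntegral.integral_const_mul,
        intervalIntegral.integral_const, smul_eq_mul]
      ring
    exact hexp ▸ intervalIntegral.integral_nonneg hab fun x _ => sq_nonneg _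
  have := discrim_le_zero hquad
  rw [discrim] at this
  linarith

lemma sq_sub_le_mul_integral_deriv_sq {z : ℝ → ℝ} {a b : ℝ} (hab : a < b)
    (hz : ContDiffOn ℝ 1 z (Icc a b)) :
    (z b - z a) ^ 2 ≤ (b - a) * ∫ x in a..b, deriv z x ^ 2 := by
  set g := derivWithin z (Icc a b)
  have hgc : ContinuousOn g (Icc a b) :=
    hz.continuousOn_derivWithin (uniqueDiffOn_Icc hab) le_rfl
  have hderiv : ∀ x ∈ Ioo a b, HasDerivAt z (deriv z x) x := fun x hx =>
    ((hz.differentiableOn one_ne_zero).differentiableAt (Icc_mem_nhds hx.1 hx.2)).hasDerivAt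
  have hdg : EqOn g (deriv z) (Ioo a b) := fun x hx =>
    derivWithin_of_mem_nhds (Icc_mem_nhds hx.1 hx.2)
  have hint : ∀ φ : ℝ → ℝ, Continuous φ →
      IntervalIntegrable (fun x => φ (deriv z x)) volume a b := fun φ hφ =>
    (intervalIntegrable_iff_integrableOn_Ioo_of_le hab.le).2 <|
      ((hφ.comp_continuousOn hgc).integrableOn_Icc.mono_set Ioo_subset_Icc_self).congr_fun
        (fun x hx => congrArg φ (hdg hx)) measurableSet_Ioo
  rw [← intervalIntegral.integral_eq_sub_of_hasDerivAt_of_le hab.le hz.continuousOn hderiv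
    (hint id continuous_id)]
  exact sq_integral_le_mul_integral_sq hab.le (hint id continuous_id) (hint _ (continuous_pow 2))

/-- For `|k| < 1` and `y_α(t) = ∫_0^t E_{1−α,1}(−k (t−τ)^{1−α}) ξ dτ`, for each fixed
`t ∈ (0,1]` the limit of `y_α(t)` as `α → 1⁻` equals `ξ t/(k+1)`, which is the minimizer
of the limiting classical problem `min ∫_0^1 (k+1)² y'(t)² dt`, `y(0) = 0`,
`y(1) = ξ/(k+1)`. -/
theorem limit_of_fractional_extremal_as_alpha_to_one
    (k ξ : ℝ) (hk : |k| < 1) (t : ℝ) (ht : t ∈ Set.Ioc (0:ℝ) 1) :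
    Filter.Tendsto
      (fun α : ℝ =>
        ∫ τ in (0:ℝ)..t, mittagLeffler (1 - α) 1 (-k * (t - τ) ^ (1 - α)) * ξ)
      (nhdsWithin 1 (Set.Ioo 0 1)) (nhds (ξ * t / (k + 1))) ∧
    (∀ z : ℝ → ℝ, ContDiffOn ℝ 1 z (Set.Icc 0 1) →
      z 0 = 0 → z 1 = ξ / (k + 1) →
      (∫ s in (0:ℝ)..1, (k + 1) ^ 2 * (deriv (fun u => ξ * u / (k + 1)) s) ^ 2) ≤
        ∫ s in (0:ℝ)..1, (k + 1) ^ 2 * (deriv z s) ^ 2) := by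
  refine ⟨?_, fun z hz hz0 hz1 => ?_⟩
  · have h := (tendsto_integral_mittagLeffler_rpow hk ht).mul_const ξ
    simp_rw [← intervalIntegral.integral_mul_const] at h
    convert h.mono_left (nhdsWithin_mono _ Ioo_subset_Iio_self) using 2
    ring
  · calc ∫ s in (0:ℝ)..1, (k + 1) ^ 2 * deriv (fun u => ξ * u / (k + 1)) s ^ 2
        = (k + 1) ^ 2 * (z 1 - z 0) ^ 2 := by simp [hz0, hz1]
      _ ≤ (k + 1) ^ 2 * ((1 - 0) * ∫ s in (0:ℝ)..1, deriv z s ^ 2) := by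
        gcongr
        exact sq_sub_le_mul_integral_deriv_sq zero_lt_one hz
      _ = ∫ s in (0:ℝ)..1, (k + 1) ^ 2 * deriv z s ^ 2 := by
        rw [intervalIntegral.integral_const_mul, sub_zero, one_mul]
end
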